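/- arXiv:2404.10216 — 3 statements merged into one kernel-verified Lean document; each statement's English description precedes it below -/
import Mathlib

section
/- Handle sliding and exchanging handle ends commute: for any set system D = (E, F) and distinct a, b ∈ E, one has (D̃_ab)'_ab = (D'_ab)̃_ab, and this common set system D̃'_ab has feasible family F Δ {F ∪ {a,b} : F ∈ F and F ⊆ E \ {a,b}} Δ {F ∪ {a} : F ∪ {b} ∈ F and F ⊆ E \ {a,b}}. -/
open scoped symmDiff

namespace SetSystem

variable {α : Type*} [DecidableEq α]

/-- The family `{F ∪ {a} : F ∪ {b} ∈ 𝓕 and F ⊆ E \ {a,b}}` used in handle sliding. -/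
def slideSet (E : Finset α) (a b : α) (𝓕 : Finset (Finset α)) : Finset (Finset α) :=
  ((E \ {a, b}).powerset.filter (fun X => insert b X ∈ 𝓕)).image (fun X => insert a X)

/-- Handle sliding of `a` over `b`: `𝓕 ∆ {F ∪ {a} : F ∪ {b} ∈ 𝓕, F ⊆ E \ {a,b}}`. -/
def handleSlide (E : Finset α) (a b : α) (𝓕 : Finset (Finset α)) : Finset (Finset α) :=
  𝓕 ∆ slideSet E a b 𝓕

/-- The family `{F ∪ {a,b} : F ∈ 𝓕 and F ⊆ E \ {a,b}}` used in exchanging handle ends. -/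
def exchSet (E : Finset α) (a b : α) (𝓕 : Finset (Finset α)) : Finset (Finset α) :=
  ((E \ {a, b}).powerset.filter (fun X => X ∈ 𝓕)).image (fun X => insert a (insert b X))

/-- Exchanging handle ends of `a` and `b`: `𝓕 ∆ {F ∪ {a,b} : F ∈ 𝓕, F ⊆ E \ {a,b}}`. -/
def exchEnds (E : Finset α) (a b : α) (𝓕 : Finset (Finset α)) : Finset (Finset α) :=
  𝓕 ∆ exchSet E a b 𝓕

/-- The twist of a set system by `A`: feasible sets become `A ∆ X` for `X` feasible. -/
def twist (A : Finset α) (𝓕 : Finset (Finset α)) : Finset (Finset α) :=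
  𝓕.image (fun X => A ∆ X)

/-- `r(D_max)`: size of a largest feasible set. -/
def rmax (𝓕 : Finset (Finset α)) : ℕ := 𝓕.sup Finset.card

/-- `r(D_min)`: size of a smallest feasible set (0 for the empty family). -/
def rmin (𝓕 : Finset (Finset α)) : ℕ := ((𝓕.image Finset.card).min).untopD 0

/-- The width `w(D) = r(D_max) - r(D_min)`. -/
def width (𝓕 : Finset (Finset α)) : ℕ := rmax 𝓕 - rmin 𝓕

/-- The twist polynomial `∂ω_D(z) = Σ_{A ⊆ E} z^{w(D*A)}`. -/
noncomputable def twistPoly (E : Finset α) (𝓕 : Finset (Finset α)) : Polynomial ℤ :=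
  ∑ A ∈ E.powerset, Polynomial.X ^ width (twist A 𝓕)

/-- A (proper) delta-matroid: a nonempty family satisfying the symmetric exchange axiom. -/
def IsDeltaMatroid (𝓕 : Finset (Finset α)) : Prop :=
  𝓕.Nonempty ∧ ∀ X ∈ 𝓕, ∀ Y ∈ 𝓕, ∀ u ∈ X ∆ Y, ∃ v ∈ X ∆ Y, X ∆ ({u, v} : Finset α) ∈ 𝓕

/-- A set system on ground set `E` is binary if some twist of it equals `D(C)` for a
symmetric matrix `C` over `GF(2)` indexed by `E`: the feasible sets of `D(C)` are those
`B ⊆ E` whose principal submatrix `C[B]` is nonsingular (with `C[∅]` nonsingular). -/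
def IsBinary (E : Finset α) (𝓕 : Finset (Finset α)) : Prop :=
  ∃ A ⊆ E, ∃ C : α → α → ZMod 2, (∀ i j, C i j = C j i) ∧
    ∀ B : Finset α, B ∈ twist A 𝓕 ↔
      B ⊆ E ∧ (Matrix.of fun i j : ↥B => C i.1 j.1).det ≠ 0

/-- `e` is a loop: it lies in no feasible set. -/
def IsLoop (𝓕 : Finset (Finset α)) (e : α) : Prop := ∀ X ∈ 𝓕, e ∉ X

/-- `e` is a coloop: it lies in every feasible set. -/
def IsColoop (𝓕 : Finset (Finset α)) (e : α) : Prop := ∀ X ∈ 𝓕, e ∈ X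

/-- Deletion of `e` (acting on the feasible family). -/
def deleteElem (𝓕 : Finset (Finset α)) (e : α) : Finset (Finset α) :=
  if ∀ X ∈ 𝓕, e ∈ X then 𝓕.image (fun X => X.erase e)
  else 𝓕.filter (fun X => e ∉ X)

/-- Contraction of `e`: `D / e = (D * {e}) \ e`. -/
def contractElem (𝓕 : Finset (Finset α)) (e : α) : Finset (Finset α) :=
  deleteElem (twist {e} 𝓕) e

section

variable {E : Finset α} {𝓕 𝓖 : Finset (Finset α)} {a b : α}

theorem mem_of_mem_slideSet {Y : Finset α} (hY : Y ∈ slideSet E a b 𝓕) : a ∈ Y := by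
  obtain ⟨X, -, rfl⟩ := Finset.mem_image.mp hY
  exact Finset.mem_insert_self a X

theorem mem_of_mem_exchSet {Y : Finset α} (hY : Y ∈ exchSet E a b 𝓕) : a ∈ Y := by
  obtain ⟨X, -, rfl⟩ := Finset.mem_image.mp hY
  exact Finset.mem_insert_self a _

/-- Toggling sets that contain `a` does not change `slideSet E a b`, which only queries
sets `F ∪ {b}` with `a ∉ F ∪ {b}`. -/
theorem slideSet_symmDiff_of_forall_mem (hab : a ≠ b) (h𝓖 : ∀ Y ∈ 𝓖, a ∈ Y) :
    slideSet E a b (𝓕 ∆ 𝓖) = slideSet E a b 𝓕 := by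
  refine congrArg (Finset.image _) (Finset.filter_congr fun X hX => ?_)
  have haX : a ∉ insert b X := by
    rw [Finset.mem_insert, not_or]
    exact ⟨hab, fun h => by simpa using Finset.mem_powerset.mp hX h⟩
  have hX𝓖 : insert b X ∉ 𝓖 := fun h => haX (h𝓖 _ h)
  simp only [Finset.mem_symmDiff, hX𝓖, not_false_eq_true, and_true, false_and, or_false]

theorem exchSet_symmDiff_of_forall_mem (h𝓖 : ∀ Y ∈ 𝓖, a ∈ Y) :
    exchSet E a b (𝓕 ∆ 𝓖) = exchSet E a b 𝓕 := by
  refine congrArg (Finset.image _) (Finset.filter_congr fun X hX => ?_)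
  have haX : a ∉ X := fun h => by simpa using Finset.mem_powerset.mp hX h
  have hX𝓖 : X ∉ 𝓖 := fun h => haX (h𝓖 _ h)
  simp only [Finset.mem_symmDiff, hX𝓖, not_false_eq_true, and_true, false_and, or_false]

theorem handleSlide_exchEnds (hab : a ≠ b) :
    handleSlide E a b (exchEnds E a b 𝓕) = 𝓕 ∆ exchSet E a b 𝓕 ∆ slideSet E a b 𝓕 := by
  rw [handleSlide, exchEnds,
    slideSet_symmDiff_of_forall_mem hab fun _ => mem_of_mem_exchSet]

theorem exchEnds_handleSlide :
    exchEnds E a b (handleSlide E a b 𝓕) = 𝓕 ∆ slideSet E a b 𝓕 ∆ exchSet E a b 𝓕 := by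
  rw [exchEnds, handleSlide, exchSet_symmDiff_of_forall_mem fun _ => mem_of_mem_slideSet]

end

theorem handleSlide_exchEnds_comm_general (E : Finset α) (𝓕 : Finset (Finset α))
    (a b : α) (hab : a ≠ b) :
    handleSlide E a b (exchEnds E a b 𝓕) = exchEnds E a b (handleSlide E a b 𝓕) ∧
    handleSlide E a b (exchEnds E a b 𝓕) = 𝓕 ∆ exchSet E a b 𝓕 ∆ slideSet E a b 𝓕 := by
  refine ⟨?_, handleSlide_exchEnds hab⟩
  rw [handleSlide_exchEnds hab, exchEnds_handleSlide, symmDiff_right_comm]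

/-- Handle sliding and exchanging handle ends commute, and the common
result has feasible family `𝓕 ∆ {F ∪ {a,b} : F ∈ 𝓕, F ⊆ E\{a,b}} ∆ {F ∪ {a} : F ∪ {b} ∈ 𝓕, F ⊆ E\{a,b}}`. -/
theorem handleSlide_exchEnds_comm (E : Finset α) (𝓕 : Finset (Finset α))
    (h𝓕 : ∀ X ∈ 𝓕, X ⊆ E) (a b : α) (ha : a ∈ E) (hb : b ∈ E) (hab : a ≠ b) :
    handleSlide E a b (exchEnds E a b 𝓕) = exchEnds E a b (handleSlide E a b 𝓕) ∧
    handleSlide E a b (exchEnds E a b 𝓕) = 𝓕 ∆ exchSet E a b 𝓕 ∆ slideSet E a b 𝓕 :=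
  handleSlide_exchEnds_comm_general E 𝓕 a b hab

end SetSystem
end

section
/- Let D = (E, F) be a proper set system, a, b ∈ E distinct, and A ⊆ E with |A ∩ {a,b}| equal to 0 or 2, and assume D̃_ab is proper. Then the minimum sizes of feasible sets of the twists agree, r((D * A)_min) = r((D̃_ab * A)_min), and likewise the maximum sizes agree, r((D * A)_max) = r((D̃_ab * A)_max). -/
open scoped symmDiff

namespace SetSystem

variable {α : Type*} [DecidableEq α]

/-! If `A` contains both or neither of `a` and `b`, the transposition of `a` and `b` fixes `A`,
so `|A ∆ (X ∪ {a})| = |A ∆ (X ∪ {b})|` whenever `a, b ∉ X`. Handle sliding only adds or removes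
sets `X ∪ {a}` whose partner `X ∪ {b}` is feasible before and after the slide, so both twists
realise the same set of feasible-set sizes, and `r_min`, `r_max` depend on nothing else. -/

lemma mem_iff_mem_of_card_inter_pair {a b : α} {A : Finset α}
    (h : (A ∩ {a, b}).card = 0 ∨ (A ∩ {a, b}).card = 2) : a ∈ A ↔ b ∈ A := by
  by_cases ha : a ∈ A <;> by_cases hb : b ∈ A <;>
    simp [Finset.inter_insert_of_mem, Finset.inter_insert_of_notMem, Finset.inter_singleton_of_mem,
      Finset.inter_singleton_of_notMem, ha, hb] at h ⊢

lemma card_symmDiff_insert_eq {a b : α} {A X : Finset α} (hA : a ∈ A ↔ b ∈ A) (ha : a ∉ X)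
    (hb : b ∉ X) : (A ∆ insert a X).card = (A ∆ insert b X).card := by
  rw [← Finset.card_map (Equiv.swap a b).toEmbedding]
  congr 1
  ext x
  simp only [Finset.mem_map_equiv, Equiv.symm_swap, Finset.mem_symmDiff, Finset.mem_insert,
    Equiv.swap_apply_def]
  grind

section HandleSlide

variable {E : Finset α} {a b : α} {𝓕 : Finset (Finset α)} {Y : Finset α}

lemma exists_eq_insert_of_mem_slideSet (hY : Y ∈ slideSet E a b 𝓕) :
    ∃ X, a ∉ X ∧ b ∉ X ∧ insert b X ∈ 𝓕 ∧ Y = insert a X := by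
  simp only [slideSet, Finset.mem_image, Finset.mem_filter, Finset.mem_powerset] at hY
  obtain ⟨X, ⟨hXE, hX𝓕⟩, rfl⟩ := hY
  have hX : Disjoint X {a, b} := (Finset.subset_sdiff.mp hXE).2
  exact ⟨X, Finset.disjoint_right.mp hX (by simp), Finset.disjoint_right.mp hX (by simp), hX𝓕, rfl⟩

lemma notMem_of_mem_slideSet (hab : a ≠ b) (hY : Y ∈ slideSet E a b 𝓕) : b ∉ Y := by
  obtain ⟨X, -, hbX, -, rfl⟩ := exists_eq_insert_of_mem_slideSet hY
  simp [hab.symm, hbX]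

lemma image_card_twist_handleSlide (hab : a ≠ b) {A : Finset α} (hA : a ∈ A ↔ b ∈ A) :
    (twist A (handleSlide E a b 𝓕)).image Finset.card = (twist A 𝓕).image Finset.card := by
  ext n
  simp only [twist, handleSlide, Finset.image_image, Finset.mem_image, Function.comp_apply,
    Finset.mem_symmDiff]
  constructor
  · rintro ⟨Y, ⟨hY, -⟩ | ⟨hY, -⟩, rfl⟩
    · exact ⟨Y, hY, rfl⟩
    · obtain ⟨X, haX, hbX, hX𝓕, rfl⟩ := exists_eq_insert_of_mem_slideSet hY
      exact ⟨insert b X, hX𝓕, (card_symmDiff_insert_eq hA haX hbX).symm⟩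
  · rintro ⟨Y, hY, rfl⟩
    by_cases hYS : Y ∈ slideSet E a b 𝓕
    · obtain ⟨X, haX, hbX, hX𝓕, rfl⟩ := exists_eq_insert_of_mem_slideSet hYS
      have hX : insert b X ∉ slideSet E a b 𝓕 := fun h ↦
        notMem_of_mem_slideSet hab h (Finset.mem_insert_self b X)
      exact ⟨insert b X, .inl ⟨hX𝓕, hX⟩, (card_symmDiff_insert_eq hA haX hbX).symm⟩
    · exact ⟨Y, .inl ⟨hY, hYS⟩, rfl⟩

end HandleSlide

lemma rmax_eq_sup_image_card {β : Type*} (𝓕 : Finset (Finset β)) :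
    rmax 𝓕 = (𝓕.image Finset.card).sup id := by
  rw [rmax, Finset.sup_image, Function.id_comp]

theorem rmin_rmax_twist_handleSlide_general (E : Finset α) (𝓕 : Finset (Finset α))
    (a b : α) (hab : a ≠ b)
    (A : Finset α)
    (hcard : (A ∩ {a, b}).card = 0 ∨ (A ∩ {a, b}).card = 2) :
    rmin (twist A 𝓕) = rmin (twist A (handleSlide E a b 𝓕)) ∧
    rmax (twist A 𝓕) = rmax (twist A (handleSlide E a b 𝓕)) := by
  have hcards : (twist A (handleSlide E a b 𝓕)).image Finset.card =
      (twist A 𝓕).image Finset.card :=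
    image_card_twist_handleSlide hab (mem_iff_mem_of_card_inter_pair hcard)
  refine ⟨?_, ?_⟩
  · rw [rmin, rmin, hcards]
  · rw [rmax_eq_sup_image_card, rmax_eq_sup_image_card, hcards]

/-- If `|A ∩ {a,b}|` is `0` or `2`, then twisting by `A` gives equal minimum
and equal maximum feasible-set sizes for `D` and the handle-slid system `D̃_ab`. -/
theorem rmin_rmax_twist_handleSlide (E : Finset α) (𝓕 : Finset (Finset α))
    (h𝓕 : ∀ X ∈ 𝓕, X ⊆ E) (hprop : 𝓕.Nonempty)
    (a b : α) (ha : a ∈ E) (hb : b ∈ E) (hab : a ≠ b)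
    (hprop' : (handleSlide E a b 𝓕).Nonempty)
    (A : Finset α) (hA : A ⊆ E)
    (hcard : (A ∩ {a, b}).card = 0 ∨ (A ∩ {a, b}).card = 2) :
    rmin (twist A 𝓕) = rmin (twist A (handleSlide E a b 𝓕)) ∧
    rmax (twist A 𝓕) = rmax (twist A (handleSlide E a b 𝓕)) :=
  rmin_rmax_twist_handleSlide_general E 𝓕 a b hab A hcard

end SetSystem
end

section
/- Let D = (E, F) be a proper set system, a, b ∈ E distinct, and A ⊆ E with |A ∩ {a,b}| = 1, and assume D'_ab is proper. Then the twists of D and of D'_ab by A have equal widths: w(D * A) = w(D'_ab * A). -/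
/-!
If `A` contains exactly one of `a, b` and `X` avoids both, then `A ∆ (X ∪ {a, b})` arises
from `A ∆ X` by adding one element and removing another, so it has the same size. Exchanging
handle ends only adds sets `X ∪ {a, b}` with `X` feasible, and a feasible set `X ∪ {a, b}`
it removes leaves `X` feasible. Hence `D * A` and `D'_ab * A` have the same set of
feasible-set sizes, in particular the same largest and smallest one.
-/

open scoped symmDiff

namespace Finset

variable {α : Type*} [DecidableEq α]

theorem card_symmDiff_add_two_mul_card_inter (s t : Finset α) :
    #(s ∆ t) + 2 * #(s ∩ t) = #s + #t := by
  have hsub : s ∩ t ⊆ s ∪ t := inter_subset_left.trans subset_union_left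
  rw [symmDiff_eq_sup_sdiff_inf, sup_eq_union, inf_eq_inter, card_sdiff_of_subset hsub]
  have := card_le_card hsub
  have := card_union_add_card_inter s t
  omega

theorem card_symmDiff_of_two_mul_card_inter {s t : Finset α} (h : 2 * #(s ∩ t) = #t) :
    #(s ∆ t) = #s := by
  have := card_symmDiff_add_two_mul_card_inter s t
  omega

end Finset

open Finset

namespace SetSystem

theorem width_eq_of_image_card_eq {α : Type*} {𝓕 𝓖 : Finset (Finset α)}
    (h : 𝓕.image card = 𝓖.image card) : width 𝓕 = width 𝓖 := by
  have hmax (𝓗 : Finset (Finset α)) : rmax 𝓗 = (𝓗.image card).sup id := by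
    rw [rmax, sup_image]; rfl
  rw [width, width, hmax, hmax, rmin, rmin, h]

variable {α : Type*} [DecidableEq α]

theorem card_symmDiff_insert_insert {A X : Finset α} {a b : α} (hab : a ≠ b)
    (hA : #(A ∩ {a, b}) = 1) (haX : a ∉ X) (hbX : b ∉ X) :
    #(A ∆ insert a (insert b X)) = #(A ∆ X) := by
  have hdisj : Disjoint X {a, b} := by simp [haX, hbX]
  have hins : insert a (insert b X) = X ∆ {a, b} := by
    rw [hdisj.symmDiff_eq_sup, sup_eq_union]
    ext; simp only [mem_insert, mem_union, mem_singleton]; tauto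
  have hinter : (A ∆ X) ∩ {a, b} = A ∩ {a, b} := by
    ext x
    simp only [mem_inter, mem_symmDiff, mem_insert, mem_singleton]
    constructor <;> rintro ⟨hx, rfl | rfl⟩ <;> simp_all
  rw [hins, ← symmDiff_assoc]
  apply card_symmDiff_of_two_mul_card_inter
  rw [hinter, hA, card_pair hab]

theorem mem_exchSet {E : Finset α} {a b : α} {𝓕 : Finset (Finset α)} {Y : Finset α} :
    Y ∈ exchSet E a b 𝓕 ↔
      ∃ X ∈ 𝓕, X ⊆ E ∧ a ∉ X ∧ b ∉ X ∧ insert a (insert b X) = Y := by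
  simp only [exchSet, mem_image, mem_filter, mem_powerset, subset_sdiff,
    disjoint_insert_right, disjoint_singleton_right]
  tauto

theorem image_exchEnds_of_invariant {β : Type*} [DecidableEq β] {f : Finset α → β}
    (E : Finset α) (a b : α) (𝓕 : Finset (Finset α))
    (hf : ∀ X, a ∉ X → b ∉ X → f (insert a (insert b X)) = f X) :
    (exchEnds E a b 𝓕).image f = 𝓕.image f := by
  ext y
  simp only [mem_image]
  constructor
  · rintro ⟨X, hX, rfl⟩
    rcases mem_symmDiff.mp hX with ⟨hX𝓕, -⟩ | ⟨hXexch, -⟩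
    · exact ⟨X, hX𝓕, rfl⟩
    · obtain ⟨X₀, hX₀, -, haX₀, hbX₀, rfl⟩ := mem_exchSet.mp hXexch
      exact ⟨X₀, hX₀, (hf X₀ haX₀ hbX₀).symm⟩
  · rintro ⟨X, hX, rfl⟩
    by_cases hXexch : X ∈ exchSet E a b 𝓕
    · obtain ⟨X₀, hX₀, -, haX₀, hbX₀, rfl⟩ := mem_exchSet.mp hXexch
      -- every member of `exchSet` contains `a`, so `X₀` survives in `exchEnds`
      have hX₀exch : X₀ ∉ exchSet E a b 𝓕 := fun h => by
        obtain ⟨X₁, -, -, -, -, rfl⟩ := mem_exchSet.mp h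
        exact haX₀ (mem_insert_self a _)
      exact ⟨X₀, mem_symmDiff.mpr (Or.inl ⟨hX₀, hX₀exch⟩), (hf X₀ haX₀ hbX₀).symm⟩
    · exact ⟨X, mem_symmDiff.mpr (Or.inl ⟨hX, hXexch⟩), rfl⟩

theorem width_twist_exchEnds_general (E : Finset α) (𝓕 : Finset (Finset α))
    (a b : α) (hab : a ≠ b)
    (A : Finset α) (hcard : (A ∩ {a, b}).card = 1) :
    width (twist A 𝓕) = width (twist A (exchEnds E a b 𝓕)) := by
  apply width_eq_of_image_card_eq
  simp only [twist, image_image]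
  exact (image_exchEnds_of_invariant E a b 𝓕
    fun X haX hbX => card_symmDiff_insert_insert hab hcard haX hbX).symm

/-- If `|A ∩ {a,b}| = 1`, then twisting by `A` gives equal widths for `D`
and the system `D'_ab` obtained by exchanging handle ends. -/
theorem width_twist_exchEnds (E : Finset α) (𝓕 : Finset (Finset α))
    (h𝓕 : ∀ X ∈ 𝓕, X ⊆ E) (hprop : 𝓕.Nonempty)
    (a b : α) (ha : a ∈ E) (hb : b ∈ E) (hab : a ≠ b)
    (hprop' : (exchEnds E a b 𝓕).Nonempty)
    (A : Finset α) (hA : A ⊆ E) (hcard : (A ∩ {a, b}).card = 1) :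
    width (twist A 𝓕) = width (twist A (exchEnds E a b 𝓕)) :=
  width_twist_exchEnds_general E 𝓕 a b hab A hcard

end SetSystem
end
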